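/- (Corollary 2, LACE for subset selection.) Let Φ be a real n×m matrix with full column rank and let σ > 0 satisfy σ‖v‖₂ ≤ ‖Φv‖₂ for all v ∈ ℝ^m. Let y ∈ ℝ^n be arbitrary, let x* be a minimizer of ‖y − Φz‖₂ over all z ∈ ℝ^m with at most k nonzero entries, let S = supp(x*) (assume |S| = k ≥ 1), and let r = y − Φx*. If (σ/2)·min_{i∈S}|x*_i| > ‖r‖₂, then for every index set A with S ⊆ A ⊆ {1,…,m}, letting x̂^A be the unique minimizer of ‖y − Φz‖₂ over z with supp(z) ⊆ A, one has |x̂^A_j| < |x̂^A_i| for every i ∈ S and every j ∈ A \ S; hence LACE run for m − k steps returns the support S. -/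

import Mathlib

open Matrix

/-- The Euclidean (ℓ₂) norm of a finitely indexed real vector. -/
noncomputable def euclNorm {ι : Type*} [Fintype ι] (v : ι → ℝ) : ℝ :=
  ‖(WithLp.equiv 2 (ι → ℝ)).symm v‖

/-- `z` has at most `k` nonzero entries. -/
def KSparse {m : ℕ} (k : ℕ) (z : Fin m → ℝ) : Prop :=
  ∃ T : Finset (Fin m), T.card ≤ k ∧ ∀ l, z l ≠ 0 → l ∈ T

/-!
Let `v = x̂^A - x*`. Both vectors are supported in `A`, so `x̂^A` being the least-squares fit on `A`
makes the residual `y - Φ x̂^A` orthogonal to `Φ v`; since `r = (y - Φ x̂^A) + Φ v`, Pythagoras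
gives `σ ‖v‖ ≤ ‖Φ v‖ ≤ ‖r‖ < (σ/2) min_{i∈S} |x*_i|`. Thus every coordinate of `x̂^A` lies within
half the smallest nonzero magnitude of `x*` from the corresponding coordinate of `x*`, which
separates the coordinates in `S` from those off `S`.
-/

open Function

section InnerProductSpace

variable {E : Type*} [NormedAddCommGroup E] [InnerProductSpace ℝ E] {u p : E}

theorem inner_eq_zero_of_forall_norm_le_norm_sub_smul (h : ∀ t : ℝ, ‖u‖ ≤ ‖u - t • p‖) :
    inner ℝ u p = 0 := by
  set c := inner ℝ u p
  -- the step `t = c / (‖p‖² + 1)` decreases `‖u - t • p‖²` by `c² (‖p‖² + 2) / (‖p‖² + 1)²`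
  have hP : 0 < ‖p‖ ^ 2 + 1 := by positivity
  have hsq := pow_le_pow_left₀ (norm_nonneg u) (h (c / (‖p‖ ^ 2 + 1))) 2
  rw [norm_sub_sq_real, real_inner_smul_right, norm_smul, mul_pow, Real.norm_eq_abs, sq_abs]
    at hsq
  have hc : c ^ 2 * (‖p‖ ^ 2 + 2) ≤ 0 := by
    field_simp at hsq
    nlinarith
  have hc2 : c ^ 2 = 0 := by nlinarith [sq_nonneg c, sq_nonneg ‖p‖]
  exact pow_eq_zero_iff two_ne_zero |>.mp hc2

theorem norm_le_norm_add_of_forall_norm_le_norm_sub_smul (h : ∀ t : ℝ, ‖u‖ ≤ ‖u - t • p‖) :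
    ‖p‖ ≤ ‖u + p‖ := by
  have hpyth := norm_add_sq_eq_norm_sq_add_norm_sq_real
    (inner_eq_zero_of_forall_norm_le_norm_sub_smul h)
  rw [mul_self_le_mul_self_iff (norm_nonneg _) (norm_nonneg _), hpyth]
  exact le_add_of_nonneg_left (mul_self_nonneg _)

end InnerProductSpace

theorem abs_le_euclNorm {ι : Type*} [Fintype ι] (v : ι → ℝ) (l : ι) : |v l| ≤ euclNorm v :=
  PiLp.norm_apply_le (WithLp.toLp 2 v) l

theorem euclNorm_mulVec_sub_le_of_isLeastSquares {ι κ : Type*} [Fintype ι] [Fintype κ]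
    (Φ : Matrix κ ι ℝ) (y : κ → ℝ) {A : Set ι} {xhat x : ι → ℝ} (hxhat : support xhat ⊆ A)
    (hmin : ∀ z, support z ⊆ A → euclNorm (y - Φ *ᵥ xhat) ≤ euclNorm (y - Φ *ᵥ z))
    (hx : support x ⊆ A) :
    euclNorm (Φ *ᵥ (xhat - x)) ≤ euclNorm (y - Φ *ᵥ x) := by
  have hline : ∀ t : ℝ, support (xhat + t • (xhat - x)) ⊆ A := fun t =>
    (support_add _ _).trans <| Set.union_subset hxhat <|
      (support_const_smul_subset _ _).trans <| (support_sub _ _).trans (Set.union_subset hxhat hx)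
  have hsplit : y - Φ *ᵥ x = (y - Φ *ᵥ xhat) + Φ *ᵥ (xhat - x) := by
    rw [mulVec_sub]; abel
  rw [hsplit]
  refine norm_le_norm_add_of_forall_norm_le_norm_sub_smul (u := WithLp.toLp 2 (y - Φ *ᵥ xhat))
    (p := WithLp.toLp 2 (Φ *ᵥ (xhat - x))) fun t => ?_
  have := hmin _ (hline t)
  rwa [mulVec_add, mulVec_smul, ← sub_sub] at this

theorem abs_lt_abs_of_forall_abs_sub_lt {ι : Type*} {xhat x : ι → ℝ} {δ : ℝ}
    (hclose : ∀ l, |xhat l - x l| < δ) {i j : ι} (hi : 2 * δ ≤ |x i|) (hj : x j = 0) :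
    |xhat j| < |xhat i| := by
  have hxj := hclose j
  have hxi := hclose i
  rw [hj, sub_zero] at hxj
  have := abs_sub_abs_le_abs_sub (x i) (xhat i)
  rw [abs_sub_comm] at this
  linarith

theorem lace_subset_selection_general {n m : ℕ}
    (Φ : Matrix (Fin n) (Fin m) ℝ)
    (σ : ℝ) (hσ : 0 < σ)
    (hlow : ∀ v : Fin m → ℝ, σ * euclNorm v ≤ euclNorm (Φ.mulVec v))
    (y : Fin n → ℝ)
    (xstar : Fin m → ℝ)
    (S : Finset (Fin m)) (hS : ∀ i, i ∈ S ↔ xstar i ≠ 0)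
    (hne : S.Nonempty)
    (r : Fin n → ℝ) (hr : r = y - Φ.mulVec xstar)
    (hnoise : σ / 2 * S.inf' hne (fun l => |xstar l|) > euclNorm r) :
    ∀ A : Finset (Fin m), S ⊆ A →
      ∀ xhatA : Fin m → ℝ,
        (∀ l, xhatA l ≠ 0 → l ∈ A) →
        (∀ z : Fin m → ℝ, (∀ l, z l ≠ 0 → l ∈ A) →
          euclNorm (y - Φ.mulVec xhatA) ≤ euclNorm (y - Φ.mulVec z)) →
        ∀ i ∈ S, ∀ j ∈ A \ S, |xhatA j| < |xhatA i| := by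
  intro A hSA xhatA hsupp hmin i hi j hj
  set μ := S.inf' hne (fun l => |xstar l|)
  have hxstar : support xstar ⊆ (A : Set (Fin m)) := fun l hl => hSA ((hS l).mpr hl)
  have hfit : euclNorm (Φ *ᵥ (xhatA - xstar)) ≤ euclNorm r :=
    hr ▸ euclNorm_mulVec_sub_le_of_isLeastSquares Φ y hsupp hmin hxstar
  have hclose : euclNorm (xhatA - xstar) < μ / 2 := by
    refine lt_of_mul_lt_mul_left ?_ hσ.le
    calc σ * euclNorm (xhatA - xstar) ≤ euclNorm r := (hlow _).trans hfit
      _ < σ * (μ / 2) := by linarith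
  refine abs_lt_abs_of_forall_abs_sub_lt (δ := μ / 2)
    (fun l => (abs_le_euclNorm (xhatA - xstar) l).trans_lt hclose) ?_ ?_
  · rw [mul_div_cancel₀ _ two_ne_zero]
    exact S.inf'_le _ hi
  · by_contra hxj
    exact (Finset.mem_sdiff.mp hj).2 ((hS j).mpr hxj)

/-- Corollary 2, LACE for subset selection.
Let `xstar` solve the subset selection problem with sparsity `k`, with support `S`
of cardinality `k ≥ 1` and residual `r = y − Φ xstar`. If `(σ/2)·min_{i∈S}|xstar i| > ‖r‖₂`,
then for every active set `A ⊇ S`, the minimizer `xhatA` of `‖y − Φz‖₂` over `z`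
supported in `A` satisfies `|xhatA j| < |xhatA i|` for all `i ∈ S` and `j ∈ A \ S`;
hence LACE run for `m − k` steps returns `S`. -/
theorem lace_subset_selection {n m : ℕ}
    (Φ : Matrix (Fin n) (Fin m) ℝ)
    (hΦ : Function.Injective Φ.mulVec)
    (σ : ℝ) (hσ : 0 < σ)
    (hlow : ∀ v : Fin m → ℝ, σ * euclNorm v ≤ euclNorm (Φ.mulVec v))
    (y : Fin n → ℝ) (k : ℕ) (hk : 1 ≤ k)
    (xstar : Fin m → ℝ)
    (hxstar_sparse : KSparse k xstar)
    (hxstar_min : ∀ z : Fin m → ℝ, KSparse k z →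
      euclNorm (y - Φ.mulVec xstar) ≤ euclNorm (y - Φ.mulVec z))
    (S : Finset (Fin m)) (hS : ∀ i, i ∈ S ↔ xstar i ≠ 0)
    (hScard : S.card = k) (hne : S.Nonempty)
    (r : Fin n → ℝ) (hr : r = y - Φ.mulVec xstar)
    (hnoise : σ / 2 * S.inf' hne (fun l => |xstar l|) > euclNorm r) :
    ∀ A : Finset (Fin m), S ⊆ A →
      ∀ xhatA : Fin m → ℝ,
        (∀ l, xhatA l ≠ 0 → l ∈ A) →
        (∀ z : Fin m → ℝ, (∀ l, z l ≠ 0 → l ∈ A) →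
          euclNorm (y - Φ.mulVec xhatA) ≤ euclNorm (y - Φ.mulVec z)) →
        ∀ i ∈ S, ∀ j ∈ A \ S, |xhatA j| < |xhatA i| :=
  lace_subset_selection_general Φ σ hσ hlow y xstar S hS hne r hr hnoise
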